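/- arXiv:1302.2503 — 3 statements merged into one kernel-verified Lean document; each statement's English description precedes it below -/
import Mathlib

section
/- Assume p and q are even (hence both ≥ 2). Then the number of tuples (z, b, a, c), where z is a ρ-vector, b_1 ≥ … ≥ b_{q−1} ≥ 0 and a_1 ≥ … ≥ a_{p−1} ≥ 0 are integers, and c is a nonzero integer, satisfying z_i − 2b_i = q − i for all 1 ≤ i ≤ q−1, z_q + 2c = 0, z_{q+j} + 2a_{p−j} = −j for all 1 ≤ j ≤ p−1, and additionally either (c > 0 and a_{p−1} ≥ c) or (c < 0 and b_{q−1} ≥ −c), equals the binomial coefficient C(k, p/2) = C(k, q/2). -/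
/-- A solution for the Dirac cohomology multiplicity count of `X'(p,q;0,0)` for
`Sp(2n,ℝ)`, `n = 2k−1 = p+q−1`, `p, q ≥ 2`: a ρ-vector `z` (strictly decreasing with
absolute values exactly `{1, …, n}`), weakly decreasing nonnegative integers
`b_1 ≥ … ≥ b_{q−1} ≥ 0`, `a_1 ≥ … ≥ a_{p−1} ≥ 0`, and a nonzero integer `c`, with
`z_i − 2b_i = q − i` for `1 ≤ i ≤ q−1`, `z_q + 2c = 0`, `z_{q+j} + 2a_{p−j} = −j` for
`1 ≤ j ≤ p−1`, and either (`c > 0` and `a_{p−1} ≥ c`) or (`c < 0` and `b_{q−1} ≥ −c`)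
(written here with 0-based indices). -/
structure RhoSol00 (n p q : ℕ) (hp : 2 ≤ p) (hq : 2 ≤ q) (hn : q - 1 + p = n) where
  z : Fin n → ℤ
  b : Fin (q - 1) → ℤ
  a : Fin (p - 1) → ℤ
  c : ℤ
  z_anti : StrictAnti z
  z_abs : Finset.univ.image (fun i => |z i|) = Finset.Icc (1 : ℤ) (n : ℤ)
  b_anti : Antitone b
  a_anti : Antitone a
  b_nonneg : ∀ i, 0 ≤ b i
  a_nonneg : ∀ m, 0 ≤ a m
  c_ne : c ≠ 0
  hzb : ∀ i : Fin (q - 1),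
    z ⟨i.1, by have := i.isLt; omega⟩ - 2 * b i = (q : ℤ) - 1 - i.1
  hzc : z ⟨q - 1, by omega⟩ + 2 * c = 0
  hza : ∀ j : Fin (p - 1),
    z ⟨q + j.1, by have := j.isLt; omega⟩ +
      2 * a ⟨p - 2 - j.1, by have := j.isLt; omega⟩ = -(j.1 : ℤ) - 1
  side : (0 < c ∧ c ≤ a ⟨p - 2, by omega⟩) ∨ (c < 0 ∧ -c ≤ b ⟨q - 2, by omega⟩)

/-!
Since `q` is even, the equations say exactly that the `i`-th entry of `z` has the parity of `i`
(1-based), with `b`, `a`, `c` read off from `z`; the inequalities on `b`, `a`, `c` then reduce, via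
`z_i + i` being antitone, to `z_{q-1} > 0 > z_{q+1}`, i.e. to `z` having `q - 1` or `q` positive
entries.

A ρ-vector is determined by its set of entries `W`. Let `C(u)` be the number of entries exceeding
`u`. For `u > 0` the parity condition says `C(u) ≡ u + 1` if `u ∈ W` and `C(u)` even if `-u ∈ W`.
As `C(2j) = C(2j+1) + [2j+1 ∈ W]`, this holds iff `2j` and `2j+1` carry the same sign for every
`j ≥ 1`. So `W` amounts to the choice of which of the blocks `{1}, {2,3}, …, {2k-2, 2k-1}` are
negated, and having `q - 1` or `q` positive entries means negating exactly `p / 2` of the `k` blocks.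
-/

open Finset

namespace StrictAnti

variable {n : ℕ}

theorem card_filter_lt_apply {α : Type*} [LinearOrder α] {z : Fin n → α} (hz : StrictAnti z)
    (i : Fin n) : #{w ∈ univ.image z | z i < w} = i := by
  rw [filter_image, card_image_of_injective _ hz.injective,
    show ({j | z i < z j} : Finset (Fin n)) = Iio i by ext j; simp [hz.lt_iff_gt], Fin.card_Iio]

theorem lt_apply_iff {α : Type*} [LinearOrder α] {z : Fin n → α} (hz : StrictAnti z) (a : α)
    (i : Fin n) : a < z i ↔ (i : ℕ) < #{j | a < z j} := by
  constructor
  · intro h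
    have : Iic i ⊆ ({j | a < z j} : Finset (Fin n)) := fun j hj => by
      simp only [mem_filter, mem_univ, true_and]
      exact h.trans_le (hz.antitone (mem_Iic.1 hj))
    simpa using card_le_card this
  · intro h
    by_contra! h'
    have : ({j | a < z j} : Finset (Fin n)) ⊆ Iio i := fun j hj => by
      simp only [mem_filter, mem_univ, true_and] at hj
      exact mem_Iio.2 (hz.lt_iff_gt.1 (h'.trans_lt hj))
    have := card_le_card this
    simp only [Fin.card_Iio] at this
    omega

theorem antitone_add_val {z : Fin n → ℤ} (hz : StrictAnti z) :
    Antitone fun i => z i + (i : ℤ) := by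
  intro i j hij
  show z j + (j : ℤ) ≤ z i + (i : ℤ)
  have h := card_le_card_of_injOn z (s := Icc i j) (t := Icc (z j) (z i))
    (fun l hl => by
      simp only [coe_Icc, Set.mem_Icc] at hl ⊢
      exact ⟨hz.antitone hl.2, hz.antitone hl.1⟩) hz.injective.injOn
  rw [Fin.card_Icc, Int.card_Icc] at h
  have := Fin.le_def.1 hij
  omega

theorem eq_of_image_eq {α : Type*} [LinearOrder α] {z z' : Fin n → α} (hz : StrictAnti z)
    (hz' : StrictAnti z') (h : univ.image z = univ.image z') : z = z' := by
  rw [← hz.range_inj hz', ← Set.image_univ, ← Set.image_univ, ← coe_univ, ← coe_image,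
    ← coe_image, h]

theorem pos_and_neg_iff {z : Fin n → ℤ} (hz : StrictAnti z) (h0 : ∀ i, z i ≠ 0) {m : ℕ}
    (hm2 : 2 ≤ m) (hm : m < n) :
    (0 < z ⟨m - 2, by omega⟩ ∧ z ⟨m, hm⟩ < 0) ↔
      m ≤ #{w ∈ univ.image z | 0 < w} + 1 ∧ #{w ∈ univ.image z | 0 < w} ≤ m := by
  rw [filter_image, card_image_of_injective _ hz.injective]
  have h1 := hz.lt_apply_iff 0 ⟨m - 2, by omega⟩
  have h2 := hz.lt_apply_iff 0 ⟨m, hm⟩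
  have := h0 ⟨m, hm⟩
  simp only at h1 h2
  omega

end StrictAnti

theorem Finset.exists_strictAnti_image_eq {α : Type*} [LinearOrder α] {n : ℕ} {W : Finset α}
    (hW : #W = n) : ∃ z : Fin n → α, StrictAnti z ∧ univ.image z = W :=
  ⟨W.orderEmbOfFin hW ∘ Fin.rev,
    (W.orderEmbOfFin hW).strictMono.comp_strictAnti Fin.rev_strictAnti, by
    rw [← image_image, image_univ_of_surjective Fin.rev_surjective, image_orderEmbOfFin_univ]⟩

theorem apply_ne_zero_of_image_abs_eq_Icc {n : ℕ} {z : Fin n → ℤ}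
    (habs : univ.image (fun i => |z i|) = Icc 1 (n : ℤ)) (i : Fin n) : z i ≠ 0 := by
  have : |z i| ∈ Icc 1 (n : ℤ) := habs ▸ mem_image_of_mem _ (mem_univ _)
  exact abs_pos.1 (by rw [mem_Icc] at this; omega)

def IsRhoSet (n : ℕ) (W : Finset ℤ) : Prop := #W = n ∧ W.image abs = Icc 1 (n : ℤ)

/-- The decreasing enumeration of `W` has the entry `v` at the 0-based position
`#{w ∈ W | v < w}`, so this says that its `i`-th entry has the parity of `i + 1`. -/
def IsAlternating (W : Finset ℤ) : Prop := ∀ v ∈ W, Odd ((#{w ∈ W | v < w} : ℤ) + v)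

def IsBlockClosed (n : ℕ) (W : Finset ℤ) : Prop :=
  ∀ j : ℤ, 1 ≤ j → 2 * j + 1 ≤ n → (2 * j ∈ W ↔ 2 * j + 1 ∈ W)

theorem Finset.card_filter_sub_one_lt (W : Finset ℤ) (x : ℤ) :
    #{w ∈ W | x - 1 < w} = #{w ∈ W | x < w} + if x ∈ W then 1 else 0 := by
  rw [card_filter, card_filter, ← sum_ite_eq' W x fun _ => 1, ← sum_add_distrib]
  refine sum_congr rfl fun w _ => ?_
  split_ifs <;> omega

theorem StrictAnti.isAlternating_image_iff {n : ℕ} {z : Fin n → ℤ} (hz : StrictAnti z) :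
    IsAlternating (univ.image z) ↔ ∀ i, Odd (z i + i) := by
  simp only [IsAlternating, forall_mem_image, mem_univ, forall_const, hz.card_filter_lt_apply,
    add_comm]

namespace IsRhoSet

variable {n : ℕ} {W W' : Finset ℤ} {u v : ℤ}

theorem abs_mem_Icc (hW : IsRhoSet n W) (hv : v ∈ W) : 1 ≤ |v| ∧ |v| ≤ n := by
  have := mem_image_of_mem abs hv
  rwa [hW.2, mem_Icc] at this

theorem injOn_abs (hW : IsRhoSet n W) : Set.InjOn abs (W : Set ℤ) := by
  rw [← card_image_iff, hW.2, Int.card_Icc, hW.1]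
  omega

theorem neg_mem_iff (hW : IsRhoSet n W) (h1 : 1 ≤ u) (h2 : u ≤ n) : -u ∈ W ↔ u ∉ W := by
  constructor
  · intro hneg hpos
    have := hW.injOn_abs hneg hpos (abs_neg u)
    omega
  · intro hpos
    obtain ⟨v, hv, hvu⟩ := mem_image.1 (show u ∈ W.image abs by rw [hW.2]; simp [h1, h2])
    rcases abs_choice v with h | h <;> rw [h] at hvu <;> subst hvu
    · exact absurd hv hpos
    · simpa using hv

theorem ext (hW : IsRhoSet n W) (hW' : IsRhoSet n W')
    (h : ∀ u : ℤ, 1 ≤ u → u ≤ n → (u ∈ W ↔ u ∈ W')) : W = W' := by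
  have key : ∀ v : ℤ, 1 ≤ |v| → |v| ≤ n → (v ∈ W ↔ v ∈ W') := fun v h1 h2 => by
    rcases abs_cases v with ⟨hv, -⟩ | ⟨hv, -⟩ <;> rw [hv] at h1 h2
    · exact h v h1 h2
    · rw [← neg_neg v, hW.neg_mem_iff h1 h2, hW'.neg_mem_iff h1 h2, h _ h1 h2]
  ext v
  exact ⟨fun hv => (key v (hW.abs_mem_Icc hv).1 (hW.abs_mem_Icc hv).2).1 hv,
    fun hv => (key v (hW'.abs_mem_Icc hv).1 (hW'.abs_mem_Icc hv).2).2 hv⟩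

theorem card_filter_abs_lt (hW : IsRhoSet n W) (h1 : 1 ≤ u) (h2 : u ≤ n + 1) :
    (#{w ∈ W | |w| < u} : ℤ) = u - 1 := by
  have himage : {w ∈ W | |w| < u}.image abs = Ico 1 u := by
    rw [← filter_image (p := (· < u)), hW.2]
    ext x; simp only [mem_filter, mem_Icc, mem_Ico]; omega
  rw [← card_image_of_injOn (hW.injOn_abs.mono (coe_subset.2 (filter_subset _ _))), himage,
    Int.card_Ico]
  omega

theorem card_filter_neg_lt (hW : IsRhoSet n W) (h1 : 1 ≤ u) (h2 : u ≤ n) (hu : -u ∈ W) :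
    (#{w ∈ W | -u < w} : ℤ) = u - 1 + #{w ∈ W | u < w} := by
  have hu' : u ∉ W := (hW.neg_mem_iff h1 h2).1 hu
  have hsplit : ({w ∈ W | -u < w} : Finset ℤ) = {w ∈ W | |w| < u} ∪ {w ∈ W | u < w} := by
    rw [← filter_or]
    refine filter_congr fun w hw => ?_
    have : w ≠ u := fun h => hu' (h ▸ hw)
    rcases abs_cases w with ⟨h, _⟩ | ⟨h, _⟩ <;> rw [h] <;> omega
  rw [hsplit, card_union_of_disjoint (disjoint_filter.2 fun w _ h h' => by
      rcases abs_cases w with ⟨h'', _⟩ | ⟨h'', _⟩ <;> rw [h''] at h <;> omega),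
    Nat.cast_add, hW.card_filter_abs_lt h1 (by omega)]

theorem card_filter_lt_of_le (hW : IsRhoSet n W) (h : n ≤ u) : #{w ∈ W | u < w} = 0 := by
  rw [card_eq_zero, filter_eq_empty_iff]
  intro w hw
  have := hW.abs_mem_Icc hw
  have := le_abs_self w
  omega

theorem isAlternating_iff (hW : IsRhoSet n W) :
    IsAlternating W ↔ ∀ u : ℤ, 1 ≤ u → u ≤ n →
      (u ∈ W → Odd ((#{w ∈ W | u < w} : ℤ) + u)) ∧ (u ∉ W → Even (#{w ∈ W | u < w} : ℤ)) := by
  have hneg : ∀ u : ℤ, 1 ≤ u → u ≤ n → -u ∈ W →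
      (Odd ((#{w ∈ W | -u < w} : ℤ) + -u) ↔ Even (#{w ∈ W | u < w} : ℤ)) := fun u h1 h2 hu => by
    rw [hW.card_filter_neg_lt h1 h2 hu, Int.odd_iff, Int.even_iff]
    omega
  constructor
  · refine fun h u h1 h2 => ⟨h u, fun hu => ?_⟩
    have hu' := (hW.neg_mem_iff h1 h2).2 hu
    exact (hneg u h1 h2 hu').1 (h _ hu')
  · intro h v hv
    obtain ⟨h1, h2⟩ := hW.abs_mem_Icc hv
    rcases abs_cases v with ⟨hv', _⟩ | ⟨hv', _⟩ <;> rw [hv'] at h1 h2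
    · exact (h v (by omega) (by omega)).1 hv
    · rw [← neg_neg v] at hv ⊢
      exact (hneg _ h1 h2 hv).2 ((h _ h1 h2).2 ((hW.neg_mem_iff h1 h2).1 hv))

theorem even_card_filter_lt_of_isBlockClosed {k : ℕ} (hW : IsRhoSet (2 * k + 1) W)
    (h : IsBlockClosed (2 * k + 1) W) {j : ℤ} (hj : j ≤ k) (h0 : 0 ≤ j) :
    Even (#{w ∈ W | 2 * j + 1 < w} : ℤ) := by
  induction j, hj using Int.leInductionDown with
  | base => rw [hW.card_filter_lt_of_le (by push_cast; omega)]; exact Int.even_iff.2 rfl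
  | pred j _ ih =>
    have e1 := card_filter_sub_one_lt W (2 * j)
    have e2 := card_filter_sub_one_lt W (2 * j + 1)
    have hb := h j (by omega) (by push_cast; omega)
    rw [add_sub_cancel_right] at e2
    rw [show 2 * (j - 1) + 1 = 2 * j - 1 by ring, e1, e2]
    have := ih (by omega)
    rw [Int.even_iff] at this ⊢
    by_cases h2j : 2 * j ∈ W <;> simp only [h2j, ← hb, if_true, if_false] <;> push_cast <;>
      omega

theorem isAlternating_iff_isBlockClosed (hW : IsRhoSet n W) (hn : Odd n) :
    IsAlternating W ↔ IsBlockClosed n W := by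
  rw [hW.isAlternating_iff]
  have hstep := card_filter_sub_one_lt W
  constructor
  · intro h j h1 h2
    have hodd := h (2 * j + 1) (by omega) h2
    have heven := h (2 * j) (by omega) (by omega)
    have := hstep (2 * j + 1)
    simp only [add_sub_cancel_right, Int.odd_iff, Int.even_iff] at hodd heven this
    by_cases h2j : 2 * j ∈ W <;> by_cases h2j1 : 2 * j + 1 ∈ W <;>
      simp only [h2j, h2j1, if_true, if_false, true_imp_iff, false_imp_iff, not_true,
        not_false_iff, true_and, and_true] at hodd heven this ⊢ <;> omega
  · intro h u h1 h2
    obtain ⟨k, rfl⟩ := hn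
    push_cast at h2
    obtain ⟨j, rfl | rfl⟩ := Int.even_or_odd' u
    · have hb := h j (by omega) (by push_cast; omega)
      have e := hstep (2 * j + 1)
      have := Int.even_iff.1 (hW.even_card_filter_lt_of_isBlockClosed h (j := j) (by omega)
        (by omega))
      rw [add_sub_cancel_right] at e
      rw [e]
      simp only [Int.odd_iff, Int.even_iff]
      by_cases h2j : 2 * j ∈ W
      · simp only [h2j, hb.1 h2j, if_true, not_true_eq_false, true_implies, false_implies,
          and_true]
        omega
      · simp only [h2j, mt hb.2 h2j, if_false, not_false_eq_true, true_implies, false_implies,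
          true_and]
        omega
    · have := Int.even_iff.1 (hW.even_card_filter_lt_of_isBlockClosed h (j := j) (by omega)
        (by omega))
      simp only [Int.odd_iff, Int.even_iff]
      omega

end IsRhoSet

/-- The ρ-set whose negative entries are the absolute values in the blocks
`{u | u / 2 = j}` with `j ∈ T`; these blocks are `{1}, {2, 3}, {4, 5}, …`. -/
noncomputable def blockSet (n : ℕ) (T : Finset ℤ) : Finset ℤ :=
  (Icc 1 (n : ℤ)).image fun u => if u / 2 ∈ T then -u else u

noncomputable def negBlocks (k : ℕ) (W : Finset ℤ) : Finset ℤ :=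
  {j ∈ Ico 0 (k : ℤ) | 2 * j + 1 ∉ W}

section blockSet

variable {n k : ℕ} {T : Finset ℤ} {u : ℤ}

theorem negBlocks_subset {W : Finset ℤ} : negBlocks k W ⊆ Ico 0 (k : ℤ) := filter_subset _ _

theorem mem_blockSet (h1 : 1 ≤ u) (h2 : u ≤ n) : u ∈ blockSet n T ↔ u / 2 ∉ T := by
  simp only [blockSet, mem_image, mem_Icc]
  constructor
  · rintro ⟨v, hv, hvu⟩
    split_ifs at hvu with h
    · omega
    · rwa [← hvu]
  · exact fun h => ⟨u, ⟨h1, h2⟩, if_neg h⟩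

theorem isRhoSet_blockSet : IsRhoSet n (blockSet n T) := by
  have habs : ∀ u ∈ Icc 1 (n : ℤ), |if u / 2 ∈ T then -u else u| = u := fun u hu => by
    rw [mem_Icc] at hu
    split_ifs <;> simp only [abs_neg, abs_of_pos (show 0 < u by omega)]
  refine ⟨?_, ?_⟩
  · rw [blockSet, card_image_of_injOn, Int.card_Icc]
    · omega
    · intro u hu v hv h
      simp only at h
      rw [← habs u hu, ← habs v hv, h]
  · rw [blockSet, image_image]
    exact (image_congr habs).trans image_id

theorem isBlockClosed_blockSet : IsBlockClosed n (blockSet n T) := fun j h1 h2 => by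
  rw [mem_blockSet (by omega) (by omega), mem_blockSet (by omega) h2,
    show 2 * j / 2 = j by omega, show (2 * j + 1) / 2 = j by omega]

theorem IsRhoSet.blockSet_negBlocks {W : Finset ℤ} (hW : IsRhoSet n W)
    (hWb : IsBlockClosed n W) (hn : n + 1 = 2 * k) : blockSet n (negBlocks k W) = W := by
  refine isRhoSet_blockSet.ext hW fun u h1 h2 => ?_
  rw [mem_blockSet h1 h2, negBlocks, mem_filter, mem_Ico, not_and, not_not]
  obtain ⟨j, rfl | rfl⟩ := Int.even_or_odd' u
  · rw [show 2 * j / 2 = j by omega, hWb j (by omega) (by omega)]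
    exact ⟨fun h => h (by omega), fun h _ => h⟩
  · rw [show (2 * j + 1) / 2 = j by omega]
    exact ⟨fun h => h (by omega), fun h _ => h⟩

theorem negBlocks_blockSet (hT : T ⊆ Ico 0 k) (hn : n + 1 = 2 * k) :
    negBlocks k (blockSet n T) = T := by
  ext j
  rw [negBlocks, mem_filter]
  constructor
  · rintro ⟨hj, h⟩
    rw [mem_Ico] at hj
    rwa [mem_blockSet (by omega) (by omega), not_not, show (2 * j + 1) / 2 = j by omega] at h
  · intro h
    have hj := mem_Ico.1 (hT h)
    rw [mem_blockSet (by omega) (by omega), not_not, show (2 * j + 1) / 2 = j by omega]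
    exact ⟨mem_Ico.2 hj, h⟩

end blockSet

theorem card_filter_Icc_ediv_two_mem {n k : ℕ} {S : Finset ℤ} (hS : S ⊆ Ico 0 k)
    (hn : n + 1 = 2 * k) :
    #{u ∈ Icc 1 (n : ℤ) | u / 2 ∈ S} + (if 0 ∈ S then 1 else 0) = 2 * #S := by
  rw [card_eq_sum_card_fiberwise (f := (· / 2)) (s := {u ∈ Icc 1 (n : ℤ) | u / 2 ∈ S}) (t := S)
      fun u hu => (mem_filter.1 hu).2,
    ← sum_ite_eq' S 0 fun _ => 1, ← sum_add_distrib, mul_comm, ← smul_eq_mul, ← sum_const]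
  refine sum_congr rfl fun j hj => ?_
  have hj' := mem_Ico.1 (hS hj)
  have hfiber :
      {u ∈ {u ∈ Icc 1 (n : ℤ) | u / 2 ∈ S} | u / 2 = j} = Icc (max 1 (2 * j)) (2 * j + 1) := by
    ext u
    simp only [mem_filter, mem_Icc]
    constructor
    · rintro ⟨⟨⟨h1, h2⟩, -⟩, rfl⟩
      omega
    · intro h
      have hu : u / 2 = j := by omega
      exact ⟨⟨⟨by omega, by omega⟩, hu ▸ hj⟩, hu⟩
  rw [hfiber, Int.card_Icc]
  split_ifs <;> omega

theorem card_filter_pos_blockSet {n k : ℕ} {T : Finset ℤ} (hT : T ⊆ Ico 0 k) (hn : n + 1 = 2 * k) :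
    #{w ∈ blockSet n T | 0 < w} + (if 0 ∈ T then 0 else 1) = 2 * (k - #T) := by
  have hpos : {w ∈ blockSet n T | 0 < w} = {u ∈ Icc 1 (n : ℤ) | u / 2 ∈ Ico 0 (k : ℤ) \ T} := by
    ext u
    simp only [mem_filter, mem_sdiff, mem_Ico, mem_Icc]
    constructor
    · rintro ⟨hu, h0⟩
      have h2 := (isRhoSet_blockSet.abs_mem_Icc hu).2
      rw [abs_of_pos h0] at h2
      rw [mem_blockSet (by omega) h2] at hu
      exact ⟨⟨by omega, h2⟩, ⟨by omega, by omega⟩, hu⟩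
    · rintro ⟨⟨h1, h2⟩, -, hu⟩
      exact ⟨(mem_blockSet h1 h2).2 hu, by omega⟩
  have := card_filter_Icc_ediv_two_mem (sdiff_subset (s := Ico 0 (k : ℤ)) (t := T)) hn
  have h0 : (0 : ℤ) ∈ Ico 0 (k : ℤ) \ T ↔ 0 ∉ T := by
    simp only [mem_sdiff, mem_Ico, le_refl, true_and]
    exact and_iff_right (by omega)
  rw [card_sdiff_of_subset hT, Int.card_Ico, sub_zero, Int.toNat_natCast] at this
  simp only [h0] at this
  rw [hpos]
  split_ifs at this ⊢ <;> omega

namespace RhoSol00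

variable {n p q : ℕ} {hp : 2 ≤ p} {hq : 2 ≤ q} {hn : q - 1 + p = n}

theorem z_injective : Function.Injective (z : RhoSol00 n p q hp hq hn → Fin n → ℤ) := by
  rintro ⟨z, b, a, c, -, -, -, -, -, -, -, hzb, hzc, hza, -⟩
    ⟨z', b', a', c', -, -, -, -, -, -, -, hzb', hzc', hza', -⟩ (rfl : z = z')
  obtain rfl : b = b' := funext fun i => by have := hzb i; have := hzb' i; omega
  obtain rfl : c = c' := by omega
  obtain rfl : a = a' := funext fun m => by
    have hm := m.isLt
    have h := hza ⟨p - 2 - m, by omega⟩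
    have h' := hza' ⟨p - 2 - m, by omega⟩
    simp only [show p - 2 - (p - 2 - (m : ℕ)) = m by omega, Fin.eta] at h h'
    omega
  rfl

theorem odd_z_add (s : RhoSol00 n p q hp hq hn) (hqe : Even q) (i : Fin n) :
    Odd (s.z i + i) := by
  obtain ⟨r, hr⟩ := hqe
  rw [Int.odd_iff]
  have hi := i.isLt
  rcases lt_trichotomy (i : ℕ) (q - 1) with h | h | h
  · have := s.hzb ⟨i, h⟩
    simp only [Fin.eta] at this
    omega
  · have := s.hzc
    rw [show (⟨q - 1, _⟩ : Fin n) = i from Fin.ext h.symm] at this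
    omega
  · have := s.hza ⟨i - q, by omega⟩
    simp only [show q + (i - q : ℕ) = i by omega, Fin.eta] at this
    omega

theorem z_q_sub_two_pos (s : RhoSol00 n p q hp hq hn) : 0 < s.z ⟨q - 2, by omega⟩ := by
  have h := s.hzb ⟨q - 2, by omega⟩
  have := s.b_nonneg ⟨q - 2, by omega⟩
  simp only at h
  omega

theorem z_q_neg (s : RhoSol00 n p q hp hq hn) : s.z ⟨q, by omega⟩ < 0 := by
  have h := s.hza ⟨0, by omega⟩
  have := s.a_nonneg ⟨p - 2, by omega⟩
  simp only [add_zero, Nat.sub_zero, Nat.cast_zero] at h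
  omega

def ofVector (hqe : Even q) (z : Fin n → ℤ) (hz : StrictAnti z)
    (habs : univ.image (fun i => |z i|) = Icc 1 (n : ℤ)) (halt : ∀ i, Odd (z i + i))
    (hpos : 0 < z ⟨q - 2, by omega⟩) (hneg : z ⟨q, by omega⟩ < 0) :
    RhoSol00 n p q hp hq hn where
  z := z
  b i := (z ⟨i, by omega⟩ + i - (q - 1)) / 2
  a m := (q - 1 - (z ⟨q + (p - 2 - m), by omega⟩ + (q + (p - 2 - m) : ℕ))) / 2
  c := -z ⟨q - 1, by omega⟩ / 2
  z_anti := hz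
  z_abs := habs
  b_anti i i' h := by
    have := hz.antitone_add_val (show (⟨i, by omega⟩ : Fin n) ≤ ⟨i', by omega⟩ from h)
    simp only at this ⊢
    omega
  a_anti m m' h := by
    have := hz.antitone_add_val
      (show (⟨q + (p - 2 - m'), by omega⟩ : Fin n) ≤ ⟨q + (p - 2 - m), by omega⟩ from
        Fin.mk_le_mk.2 (by have := Fin.le_def.1 h; omega))
    simp only at this ⊢
    omega
  b_nonneg i := by
    have := hz.antitone_add_val
      (show (⟨i, by omega⟩ : Fin n) ≤ ⟨q - 2, by omega⟩ from Fin.mk_le_mk.2 (by omega))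
    simp only at this ⊢
    omega
  a_nonneg m := by
    have := hz.antitone_add_val
      (show (⟨q, by omega⟩ : Fin n) ≤ ⟨q + (p - 2 - m), by omega⟩ from Fin.mk_le_mk.2 (by omega))
    simp only at this ⊢
    omega
  c_ne := by
    have := apply_ne_zero_of_image_abs_eq_Icc habs ⟨q - 1, by omega⟩
    have := Int.odd_iff.1 (halt ⟨q - 1, by omega⟩)
    obtain ⟨r, hr⟩ := hqe
    simp only at this
    omega
  hzb i := by
    have := Int.odd_iff.1 (halt ⟨i, by omega⟩)
    obtain ⟨r, hr⟩ := hqe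
    simp only at this ⊢
    omega
  hzc := by
    have := Int.odd_iff.1 (halt ⟨q - 1, by omega⟩)
    obtain ⟨r, hr⟩ := hqe
    simp only at this
    omega
  hza j := by
    have := Int.odd_iff.1 (halt ⟨q + j, by omega⟩)
    obtain ⟨r, hr⟩ := hqe
    simp only [show p - 2 - (p - 2 - (j : ℕ)) = j by omega] at this ⊢
    omega
  side := by
    have h1 := hz (show (⟨q - 2, by omega⟩ : Fin n) < ⟨q - 1, by omega⟩ from
      Fin.mk_lt_mk.2 (by omega))
    have h2 := hz (show (⟨q - 1, by omega⟩ : Fin n) < ⟨q, by omega⟩ from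
      Fin.mk_lt_mk.2 (by omega))
    have e1 := Int.odd_iff.1 (halt ⟨q - 2, by omega⟩)
    have e2 := Int.odd_iff.1 (halt ⟨q - 1, by omega⟩)
    have e3 := Int.odd_iff.1 (halt ⟨q, by omega⟩)
    have := apply_ne_zero_of_image_abs_eq_Icc habs ⟨q - 1, by omega⟩
    obtain ⟨r, hr⟩ := hqe
    simp only [show p - 2 - (p - 2) = 0 by omega, add_zero] at e1 e2 e3 ⊢
    omega

theorem image_z_injective :
    Function.Injective fun s : RhoSol00 n p q hp hq hn => univ.image s.z :=
  fun s t h => z_injective (s.z_anti.eq_of_image_eq t.z_anti h)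

theorem range_image_z {k : ℕ} (hpe : Even p) (hqe : Even q) (hk : n + 1 = 2 * k) :
    Set.range (fun s : RhoSol00 n p q hp hq hn => univ.image s.z) =
      (powersetCard (p / 2) (Ico 0 (k : ℤ))).image (blockSet n) := by
  have hodd : Odd n := ⟨k - 1, by omega⟩
  obtain ⟨r, hr⟩ := hpe
  ext W
  simp only [Set.mem_range, coe_image, Set.mem_image, mem_coe, mem_powersetCard]
  constructor
  · rintro ⟨s, rfl⟩
    have hW : IsRhoSet n (univ.image s.z) :=
      ⟨by rw [card_image_of_injective _ s.z_anti.injective, card_univ, Fintype.card_fin],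
        by rw [image_image]; exact s.z_abs⟩
    have hbc := (hW.isAlternating_iff_isBlockClosed hodd).1
      (s.z_anti.isAlternating_image_iff.2 (s.odd_z_add hqe))
    have hcount := card_filter_pos_blockSet (negBlocks_subset (W := univ.image s.z)) hk
    rw [hW.blockSet_negBlocks hbc hk] at hcount
    have hsign := (s.z_anti.pos_and_neg_iff (apply_ne_zero_of_image_abs_eq_Icc s.z_abs) hq
      (by omega)).1 ⟨s.z_q_sub_two_pos, s.z_q_neg⟩
    refine ⟨negBlocks k _, ⟨negBlocks_subset, ?_⟩, hW.blockSet_negBlocks hbc hk⟩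
    have := card_le_card (negBlocks_subset (k := k) (W := univ.image s.z))
    rw [Int.card_Ico] at this
    split_ifs at hcount <;> omega
  · rintro ⟨T, ⟨hT, hTc⟩, rfl⟩
    obtain ⟨z, hz, hzW⟩ := exists_strictAnti_image_eq (isRhoSet_blockSet (n := n) (T := T)).1
    have habs : univ.image (fun i => |z i|) = Icc 1 (n : ℤ) := by
      rw [← isRhoSet_blockSet.2, ← hzW, image_image]
      rfl
    have halt := hz.isAlternating_image_iff.1 (hzW ▸
      (isRhoSet_blockSet.isAlternating_iff_isBlockClosed hodd).2 isBlockClosed_blockSet)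
    have hcount := card_filter_pos_blockSet hT hk
    have hsign := (hz.pos_and_neg_iff (apply_ne_zero_of_image_abs_eq_Icc habs) hq
      (by omega)).2 (by rw [hzW]; split_ifs at hcount <;> omega)
    exact ⟨ofVector hqe z hz habs halt hsign.1 hsign.2, hzW⟩

end RhoSol00

/-- Theorem on `X'(p,q;0,0)` with `p, q` even: the number of solutions equals
`C(k, p/2) = C(k, q/2)` (here `n = 2k−1`, `p + q = 2k`, `p, q` even positive). -/
theorem stmt14 (n k p q : ℕ) (hn : n = 2 * k - 1)
    (hppos : 0 < p) (hqpos : 0 < q) (hpq : p + q = 2 * k)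
    (hpe : p % 2 = 0) (hqe : q % 2 = 0) :
    Nat.card (RhoSol00 n p q (by omega) (by omega) (by omega)) =
        Nat.choose k (p / 2) ∧
      Nat.choose k (p / 2) = Nat.choose k (q / 2) := by
  refine ⟨?_, by rw [show q / 2 = k - p / 2 by omega, Nat.choose_symm (by omega)]⟩
  have hnk : n + 1 = 2 * k := by omega
  rw [← Nat.card_range_of_injective RhoSol00.image_z_injective,
    RhoSol00.range_image_z (Nat.even_iff.2 hpe) (Nat.even_iff.2 hqe) hnk, Nat.card_coe_set_eq,
    Set.ncard_coe_finset, card_image_of_injOn, card_powersetCard, Int.card_Ico, sub_zero,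
    Int.toNat_natCast]
  intro T hT T' hT' h
  rw [← negBlocks_blockSet (mem_powersetCard.1 hT).1 hnk, h,
    negBlocks_blockSet (mem_powersetCard.1 hT').1 hnk]
end

section
/- Assume p and q are odd. Then there is no tuple (z, b, a, c), where z is a ρ-vector, b_1 ≥ … ≥ b_{q−1} ≥ 0 and a_1 ≥ … ≥ a_{p−1} ≥ 0 are integers, and c is a nonzero integer, satisfying z_i − 2b_i = q − i for all 1 ≤ i ≤ q−1, z_q + 2c = 0, z_{q+j} + 2a_{p−j} = −j for all 1 ≤ j ≤ p−1, together with either (c > 0 and (p = 1 or a_{p−1} ≥ c)) or (c < 0 and (q = 1 or b_{q−1} ≥ −c)): the number of such tuples is 0. -/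
/-- A solution for the Dirac cohomology multiplicity count of `X'(p,q;0,0)` for
`Sp(2n,ℝ)`, `n = 2k−1 = p+q−1`, `p, q ≥ 1`: a ρ-vector `z` (strictly decreasing with
absolute values exactly `{1, …, n}`), weakly decreasing nonnegative integers
`b_1 ≥ … ≥ b_{q−1} ≥ 0`, `a_1 ≥ … ≥ a_{p−1} ≥ 0`, and a nonzero integer `c`, with
`z_i − 2b_i = q − i` for `1 ≤ i ≤ q−1`, `z_q + 2c = 0`, `z_{q+j} + 2a_{p−j} = −j` for
`1 ≤ j ≤ p−1`, and either (`c > 0` and (`p = 1` or `a_{p−1} ≥ c`)) or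
(`c < 0` and (`q = 1` or `b_{q−1} ≥ −c`)) (written here with 0-based indices). -/
structure RhoSol00' (n p q : ℕ) (hp : 1 ≤ p) (hq : 1 ≤ q) (hn : q - 1 + p = n) where
  z : Fin n → ℤ
  b : Fin (q - 1) → ℤ
  a : Fin (p - 1) → ℤ
  c : ℤ
  z_anti : StrictAnti z
  z_abs : Finset.univ.image (fun i => |z i|) = Finset.Icc (1 : ℤ) (n : ℤ)
  b_anti : Antitone b
  a_anti : Antitone a
  b_nonneg : ∀ i, 0 ≤ b i
  a_nonneg : ∀ m, 0 ≤ a m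
  c_ne : c ≠ 0
  hzb : ∀ i : Fin (q - 1),
    z ⟨i.1, by have := i.isLt; omega⟩ - 2 * b i = (q : ℤ) - 1 - i.1
  hzc : z ⟨q - 1, by omega⟩ + 2 * c = 0
  hza : ∀ j : Fin (p - 1),
    z ⟨q + j.1, by have := j.isLt; omega⟩ +
      2 * a ⟨p - 2 - j.1, by have := j.isLt; omega⟩ = -(j.1 : ℤ) - 1
  side : (0 < c ∧ (p = 1 ∨ ∃ h : 2 ≤ p, c ≤ a ⟨p - 2, by omega⟩)) ∨
    (c < 0 ∧ (q = 1 ∨ ∃ h : 2 ≤ q, -c ≤ b ⟨q - 2, by omega⟩))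

/-! Each `z_i` has the parity of `q - 1 - i` (0-based; read off from `b`, `c` and `a`), hence so
does `|z_i|`. Since the `|z_i|` are `1, …, n` in some order, `∑ᵢ (|z_i| - (i + 1)) = 0`, while every
term is `≡ q (mod 2)`. So `n q` is even, which is impossible when `p` and `q` are odd, as then
`n = p + q - 1` is odd. -/

lemma Fin.sum_eq_sum_Icc_of_image_eq_Icc {n : ℕ} {f : Fin n → ℤ}
    (hf : Finset.univ.image f = Finset.Icc 1 (n : ℤ)) :
    ∑ i, f i = ∑ m ∈ Finset.Icc 1 (n : ℤ), m := by
  have hinj : Set.InjOn f (Finset.univ : Finset (Fin n)) :=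
    Finset.card_image_iff.mp (by simp [hf])
  rw [← hf, Finset.sum_image hinj]

lemma Fin.image_succ_eq_Icc (n : ℕ) :
    Finset.univ.image (fun i : Fin n => (i : ℤ) + 1) = Finset.Icc 1 (n : ℤ) := by
  ext m
  simp only [Finset.mem_image, Finset.mem_univ, true_and, Finset.mem_Icc]
  constructor
  · rintro ⟨i, rfl⟩
    omega
  · intro hm
    exact ⟨⟨(m - 1).toNat, by omega⟩, by simp; omega⟩

lemma even_mul_of_abs_perm_of_parity {n : ℕ} {q : ℤ} {z : Fin n → ℤ}
    (hz : Finset.univ.image (fun i => |z i|) = Finset.Icc 1 (n : ℤ))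
    (hpar : ∀ i : Fin n, Even (z i - (q - 1 - i))) :
    Even ((n : ℤ) * q) := by
  have hsum : ∑ i, (|z i| - ((i : ℤ) + 1) - q) = -((n : ℤ) * q) := by
    rw [Finset.sum_sub_distrib, Finset.sum_sub_distrib, Fin.sum_eq_sum_Icc_of_image_eq_Icc hz,
      Fin.sum_eq_sum_Icc_of_image_eq_Icc (Fin.image_succ_eq_Icc n)]
    simp
  have hterm (i : Fin n) : Even (|z i| - ((i : ℤ) + 1) - q) := by
    have habs : Even (|z i| - z i) := Int.even_sub.mpr even_abs
    rw [show |z i| - ((i : ℤ) + 1) - q = z i - (q - 1 - i) + (|z i| - z i) - 2 * ((i : ℤ) + 1) by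
      ring]
    exact ((hpar i).add habs).sub (even_two_mul _)
  rw [← even_neg, ← hsum]
  exact Finset.even_sum _ fun i _ => hterm i

namespace RhoSol00'

variable {n p q : ℕ} {hp : 1 ≤ p} {hq : 1 ≤ q} {hn : q - 1 + p = n}

lemma even_z_sub (s : RhoSol00' n p q hp hq hn) (i : Fin n) :
    Even (s.z i - ((q : ℤ) - 1 - i)) := by
  rcases lt_trichotomy i.1 (q - 1) with hi | hi | hi
  · refine ⟨s.b ⟨i, hi⟩, ?_⟩
    linarith [s.hzb ⟨i, hi⟩]
  · have hzc := s.hzc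
    rw [show (⟨q - 1, _⟩ : Fin n) = i from Fin.ext hi.symm] at hzc
    refine ⟨-s.c, ?_⟩
    have : (i : ℤ) = q - 1 := by omega
    linarith
  · have hj : i.1 - q < p - 1 := by omega
    have hza := s.hza ⟨i - q, hj⟩
    rw [show (⟨q + (i - q), _⟩ : Fin n) = i from Fin.ext (by simp only; omega)] at hza
    refine ⟨-s.a ⟨p - 2 - (i - q), by omega⟩, ?_⟩
    have : ((i - q : ℕ) : ℤ) = i - q := by omega
    linarith

lemma isEmpty_of_odd (hpo : Odd p) (hqo : Odd q) : IsEmpty (RhoSol00' n p q hp hq hn) := by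
  refine ⟨fun s => ?_⟩
  have hno : Odd n := by
    obtain ⟨a, rfl⟩ := hpo
    obtain ⟨b, rfl⟩ := hqo
    exact ⟨a + b, by omega⟩
  have hodd : Odd ((n : ℤ) * q) := Int.odd_mul.mpr ⟨by exact_mod_cast hno, by exact_mod_cast hqo⟩
  exact Int.not_even_iff_odd.mpr hodd (even_mul_of_abs_perm_of_parity s.z_abs s.even_z_sub)

end RhoSol00'

/-- Theorem on `X'(p,q;0,0)` with `p, q` odd: there are no solutions, i.e. the Dirac
cohomology of `X'(p,q;0,0)` vanishes (here `n = 2k−1`, `p + q = 2k`, `p, q` odd). -/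
theorem stmt17 (n k p q : ℕ) (hn : n = 2 * k - 1)
    (hppos : 0 < p) (hqpos : 0 < q) (hpq : p + q = 2 * k)
    (hpo : p % 2 = 1) (hqo : q % 2 = 1) :
    Nat.card (RhoSol00' n p q hppos hqpos (by omega)) = 0 := by
  have := RhoSol00'.isEmpty_of_odd (n := n) (hp := hppos) (hq := hqpos) (hn := by omega)
    (Nat.odd_iff.mpr hpo) (Nat.odd_iff.mpr hqo)
  exact Nat.card_of_isEmpty
end

section
/- For every solution (v, (a,b), z), the coordinates of v in positions p2+1 through p−q2 of the left block are, in order, i_1+1, i_2+2, …, i_r+r, j_1+p−s+1, j_2+p−s+2, …, j_s+p, and the coordinates of v in positions q2+1 through q−p2 of the right block are, in order, k_1+1, k_2+2, …, k_t+t, l_1+q−u+1, l_2+q−u+2, …, l_u+q. In other words, the middle windows of the two blocks of v carry exactly the tail entries of τ̃. -/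
/-- A block vector with `r` head entries `f m + (m+1)`, then `c` equal middle entries
`mid`, then tail entries `g (m − (r+c)) + (m+1)` (0-based index `m`).  With
`f = i, g = j` (resp. `f = k, g = l`) and `mid = (p2+q2+1)/2 + r` (resp. `+ t`) this is
the left (resp. right) block of the vector `τ̃` of the `U(p,q)` computation. -/
def blockVec (r c : ℕ) (mid : ℚ) (f g : ℕ → ℚ) : ℕ → ℚ := fun m =>
  if m < r then f m + (m + 1)
  else if m < r + c then mid
  else g (m - (r + c)) + (m + 1)

/-- The left block of the vector `μ̃(a,b)` of the `U(p,q)` computation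
(0-based index `m`, relevant for `m < p = p1 + p2 = p2 + r + s + q2`). -/
def muLeft (p1 q1 p2 q2 r s : ℕ) (ξ : ℤ) (b : Fin p2 → ℤ) (a : Fin q2 → ℤ) :
    ℕ → ℚ := fun m =>
  if h : m < p2 then ((p1 : ℚ) - q1) / 2 - b ⟨m, h⟩ + (m + 1)
  else if m < p2 + r + s then (ξ : ℚ) + ((q2 : ℚ) - p2) / 2 + (m + 1)
  else if h3 : p2 + r + s + q2 - 1 - m < q2 then
    (ξ : ℚ) + ((q2 : ℚ) - p2) / 2 + a ⟨p2 + r + s + q2 - 1 - m, h3⟩ + (m + 1)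
  else 0

/-- The right block of the vector `μ̃(a,b)` of the `U(p,q)` computation
(0-based index `m`, relevant for `m < q = q1 + q2 = q2 + t + u + p2`). -/
def muRight (p1 q1 p2 q2 t u : ℕ) (ξ : ℤ) (b : Fin p2 → ℤ) (a : Fin q2 → ℤ) :
    ℕ → ℚ := fun m =>
  if h : m < q2 then ((q1 : ℚ) - p1) / 2 - a ⟨m, h⟩ + (m + 1)
  else if m < q2 + t + u then (ξ : ℚ) + ((p2 : ℚ) - q2) / 2 + (m + 1)
  else if h3 : q2 + t + u + p2 - 1 - m < p2 then
    (ξ : ℚ) + ((p2 : ℚ) - q2) / 2 + b ⟨q2 + t + u + p2 - 1 - m, h3⟩ + (m + 1)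
  else 0

/-- A *solution* `(v, (a,b), z)` of the Dirac cohomology equation for the unipotent
representation `X(p1,q1,ξ)` of `U(p,q)`: the left (length `p = p1+p2`) and right
(length `q = q1+q2`) blocks of `v` are permutations of the corresponding blocks of
`τ̃`; `b_1 ≥ … ≥ b_{p2} ≥ 0` and `a_1 ≥ … ≥ a_{q2} ≥ 0` are integers; `z` is a shuffle
vector (both blocks strictly decreasing, with multiset of all `p+q` coordinates equal
to `{(p+q−1)/2, (p+q−3)/2, …, −(p+q−1)/2}`); and `v = μ̃(a,b) + z` coordinatewise. -/
structure USol (p1 p2 q1 q2 r s t u : ℕ) (ξ : ℤ) (i j k l : ℕ → ℚ) where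
  vL : Fin (p1 + p2) → ℚ
  vR : Fin (q1 + q2) → ℚ
  b : Fin p2 → ℤ
  a : Fin q2 → ℤ
  zL : Fin (p1 + p2) → ℚ
  zR : Fin (q1 + q2) → ℚ
  b_anti : Antitone b
  b_nonneg : ∀ m, 0 ≤ b m
  a_anti : Antitone a
  a_nonneg : ∀ m, 0 ≤ a m
  hvL : Multiset.map vL Finset.univ.val =
    Multiset.map (fun m : Fin (p1 + p2) =>
      blockVec r (p2 + q2) (((p2 : ℚ) + q2 + 1) / 2 + r) i j m.1) Finset.univ.val
  hvR : Multiset.map vR Finset.univ.val =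
    Multiset.map (fun m : Fin (q1 + q2) =>
      blockVec t (p2 + q2) (((p2 : ℚ) + q2 + 1) / 2 + t) k l m.1) Finset.univ.val
  zL_anti : StrictAnti zL
  zR_anti : StrictAnti zR
  hz : Multiset.map zL Finset.univ.val + Multiset.map zR Finset.univ.val =
    Multiset.map (fun m : ℕ => ((p1 : ℚ) + p2 + q1 + q2 - 1) / 2 - m)
      (Finset.range (p1 + p2 + q1 + q2)).val
  heqL : ∀ m : Fin (p1 + p2), vL m = muLeft p1 q1 p2 q2 r s ξ b a m.1 + zL m
  heqR : ∀ m : Fin (q1 + q2), vR m = muRight p1 q1 p2 q2 t u ξ b a m.1 + zR m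

/-!
On the window `p2 ≤ m < p2 + r + s` of the left block, `v m = ξ + (q2 - p2)/2 + (m + 1) + z m`;
before it `v` is at most this expression and after it at least (`b, a ≥ 0` and the range of `ξ`).
The entries of `z` are strictly decreasing half-integers, so the expression is antitone in `m`,
and comparing it with the sorted block of `τ̃` gives one inequality for each window entry, e.g.
`z (p2 + m) ≤ i m - C` with `C = ξ + (p2 + q2)/2`. The opposite inequality is a count: exactly
`p2 + q2 + #{x ∈ {i} ∪ {k} | i m ≤ x}` entries of the shuffle vector are `≥ i m - C`, and the bounds
already proved for the right block let it hold at most `q2 + #{k | i m ≤ k}` of them, so the left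
block holds at least `p2 + m + 1`. The tail entries `j` are treated dually, and the right block by
exchanging the two blocks.
-/

open Finset

theorem card_filter_range_eq_of_map_eq {β : Type*} {v τ : ℕ → β} {n : ℕ}
    (h : (range n).val.map v = (range n).val.map τ) (P : β → Prop) [DecidablePred P] :
    #{x ∈ range n | P (v x)} = #{x ∈ range n | P (τ x)} := by
  have := congrArg (Multiset.countP P) h
  rwa [Multiset.countP_map, Multiset.countP_map] at this

section AntitoneCount

variable {α : Type*} [LinearOrder α] {f : ℕ → α} {n a : ℕ} {θ : α}

theorem le_apply_of_lt_card_filter (hf : AntitoneOn f (Set.Iio n))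
    (h : a < #{x ∈ range n | θ ≤ f x}) : θ ≤ f a := by
  by_contra! hlt
  have hsub : {x ∈ range n | θ ≤ f x} ⊆ range a := by
    intro x hx
    simp only [mem_filter, mem_range] at hx ⊢
    by_contra! hax
    exact (hlt.trans_le' (hf (by simp; omega) (by simpa using hx.1) hax)).not_ge hx.2
  simpa using (card_le_card hsub).trans_lt' h

theorem apply_le_of_sub_le_card_filter (hf : AntitoneOn f (Set.Iio n)) (ha : a < n)
    (h : n - a ≤ #{x ∈ range n | f x ≤ θ}) : f a ≤ θ := by
  by_contra! hlt
  have hsub : {x ∈ range n | f x ≤ θ} ⊆ Ico (a + 1) n := by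
    intro x hx
    simp only [mem_filter, mem_range, mem_Ico] at hx ⊢
    refine ⟨?_, hx.1⟩
    by_contra! hxa
    exact (hlt.trans_le (hf (by simpa using hx.1) (by simpa using ha) (by omega))).not_ge hx.2
  have := card_le_card hsub
  simp only [Nat.card_Ico] at this
  omega

end AntitoneCount

theorem card_filter_range_eq_of_iff_le {P : ℕ → Prop} [DecidablePred P] {n a : ℕ} (ha : a < n)
    (h : ∀ e < n, P e ↔ e ≤ a) : #{e ∈ range n | P e} = a + 1 := by
  rw [← card_range (a + 1)]
  congr 1
  ext e
  simp only [mem_filter, mem_range]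
  constructor
  · rintro ⟨he, hP⟩
    have := (h e he).1 hP
    omega
  · intro he
    exact ⟨by omega, (h e (by omega)).2 (by omega)⟩

theorem card_filter_range_eq_of_iff_ge {P : ℕ → Prop} [DecidablePred P] {n a : ℕ}
    (h : ∀ e < n, P e ↔ a ≤ e) : #{e ∈ range n | P e} = n - a := by
  rw [← Nat.card_Ico a n]
  congr 1
  ext e
  simp only [mem_filter, mem_range, mem_Ico]
  constructor
  · rintro ⟨he, hP⟩
    exact ⟨(h e he).1 hP, he⟩
  · rintro ⟨hae, he⟩
    exact ⟨he, (h e he).2 hae⟩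

theorem card_filter_le_card_add_card_filter {α : Type*} {f g : ℕ → α} {P : α → Prop}
    [DecidablePred P] {n a w : ℕ} (S : Finset ℕ) (hwin : ∀ m < w, P (f (a + m)) → P (g m))
    (hout : ∀ x < n, P (f x) → x < a ∨ a + w ≤ x → x ∈ S) :
    #{x ∈ range n | P (f x)} ≤ #S + #{m ∈ range w | P (g m)} := by
  have hsub : {x ∈ range n | P (f x)} ⊆ S ∪ {m ∈ range w | P (g m)}.image (a + ·) := by
    intro x hx
    simp only [mem_filter, mem_range] at hx
    by_cases hxw : a ≤ x ∧ x < a + w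
    · refine mem_union_right _ (mem_image.2 ⟨x - a, ?_, by omega⟩)
      simp only [mem_filter, mem_range]
      exact ⟨by omega, hwin _ (by omega) (by rw [Nat.add_sub_cancel' hxw.1]; exact hx.2)⟩
    · exact mem_union_left _ (hout x hx.1 hx.2 (by omega))
  exact (card_le_card hsub).trans ((card_union_le _ _).trans (by grw [card_image_le]))

section OrderStatistic

variable {α : Type*} [LinearOrder α] {v τ g : ℕ → α} {n : ℕ}

theorem le_apply_sub_of_map_eq (h : (range n).val.map v = (range n).val.map τ)
    (hτ : AntitoneOn τ (Set.Iio n)) (hg : AntitoneOn g (Set.Iio n)) {a x : ℕ}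
    (hgv : ∀ y, a ≤ y → y < n → g y ≤ v y) (hax : a ≤ x) (hxn : x < n) :
    g x ≤ τ (x - a) := by
  refine le_apply_of_lt_card_filter hτ ?_
  rw [← card_filter_range_eq_of_map_eq h (g x ≤ ·)]
  have hsub : Icc a x ⊆ {y ∈ range n | g x ≤ v y} := by
    intro y hy
    simp only [mem_Icc, mem_filter, mem_range] at hy ⊢
    exact ⟨by omega, (hg (by simpa using hy.2.trans_lt hxn) (by simpa using hxn) hy.2).trans
      (hgv y hy.1 (by omega))⟩
  have := card_le_card hsub
  simp only [Nat.card_Icc] at this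
  omega

theorem apply_add_le_of_map_eq (h : (range n).val.map v = (range n).val.map τ)
    (hτ : AntitoneOn τ (Set.Iio n)) (hg : AntitoneOn g (Set.Iio n)) {b x : ℕ} (hbn : b ≤ n)
    (hvg : ∀ y < b, v y ≤ g y) (hxb : x < b) :
    τ (x + (n - b)) ≤ g x := by
  refine apply_le_of_sub_le_card_filter hτ (by omega) ?_
  rw [← card_filter_range_eq_of_map_eq h (· ≤ g x)]
  have hsub : Ico x b ⊆ {y ∈ range n | v y ≤ g x} := by
    intro y hy
    simp only [mem_Ico, mem_filter, mem_range] at hy ⊢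
    exact ⟨by omega, (hvg y hy.2).trans
      (hg (by simpa using hxb.trans_le hbn) (by simp; omega) hy.1)⟩
  have := card_le_card hsub
  simp only [Nat.card_Ico] at this
  omega

end OrderStatistic

theorem StrictAntiOn.antitoneOn_add_natCast {g : ℕ → ℚ} {n : ℕ} {c : ℚ}
    (hg : StrictAntiOn g (Set.Iio n)) (hc : ∀ m < n, ∃ e : ℤ, g m = c + e) :
    AntitoneOn (fun m => g m + m) (Set.Iio n) := by
  refine antitoneOn_of_add_one_le Set.ordConnected_Iio fun m _ hm hm1 => ?_
  obtain ⟨e, he⟩ := hc m hm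
  obtain ⟨e', he'⟩ := hc (m + 1) hm1
  have hlt : (e' : ℚ) < e := by linarith [hg hm hm1 (Nat.lt_succ_self m)]
  have : (e' : ℚ) + 1 ≤ e := by exact_mod_cast Int.add_one_le_of_lt (by exact_mod_cast hlt)
  push_cast
  linarith

section BlockVec

variable {r c s : ℕ} {mid : ℚ} {f g : ℕ → ℚ}

theorem blockVec_of_lt (m : ℕ) (hm : m < r) : blockVec r c mid f g m = f m + (m + 1) :=
  if_pos hm

theorem blockVec_of_le_of_lt (m : ℕ) (h₁ : r ≤ m) (h₂ : m < r + c) :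
    blockVec r c mid f g m = mid := by
  simp only [blockVec, if_neg (not_lt.2 h₁), if_pos h₂]

theorem blockVec_add (m : ℕ) : blockVec r c mid f g (r + c + m) = g m + (r + c + m + 1) := by
  simp only [blockVec, if_neg (show ¬ r + c + m < r by omega),
    if_neg (show ¬ r + c + m < r + c by omega), Nat.add_sub_cancel_left, Nat.cast_add]

theorem blockVec_le_mid (hgmid : ∀ m < s, g m + (r + c + m + 1) ≤ mid) {m : ℕ}
    (h₁ : r ≤ m) (h₂ : m < r + c + s) : blockVec r c mid f g m ≤ mid := by
  rcases lt_or_ge m (r + c) with h | h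
  · exact (blockVec_of_le_of_lt m h₁ h).le
  · obtain ⟨d, rfl⟩ := Nat.exists_eq_add_of_le h
    rw [blockVec_add]
    exact hgmid d (by omega)

theorem mid_le_blockVec (hfmid : ∀ m < r, mid ≤ f m + (m + 1)) {m : ℕ} (h : m < r + c) :
    mid ≤ blockVec r c mid f g m := by
  rcases lt_or_ge m r with h' | h'
  · rw [blockVec_of_lt m h']
    exact hfmid m h'
  · exact (blockVec_of_le_of_lt m h' h).ge

theorem blockVec_antitoneOn (hf : AntitoneOn (fun m => f m + m) (Set.Iio r))
    (hg : AntitoneOn (fun m => g m + m) (Set.Iio s)) (hfmid : ∀ m < r, mid ≤ f m + (m + 1))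
    (hgmid : ∀ m < s, g m + (r + c + m + 1) ≤ mid) :
    AntitoneOn (blockVec r c mid f g) (Set.Iio (r + c + s)) := by
  intro x hx y hy hxy
  simp only [Set.mem_Iio] at hx hy
  rcases lt_or_ge y r with hyr | hyr
  · rw [blockVec_of_lt x (by omega), blockVec_of_lt y hyr]
    have := hf (show x ∈ Set.Iio r by simp; omega) (show y ∈ Set.Iio r by simpa) hxy
    simp only at this
    linarith
  rcases lt_or_ge x (r + c) with hxc | hxc
  · exact (blockVec_le_mid hgmid hyr hy).trans (mid_le_blockVec hfmid hxc)
  obtain ⟨d, rfl⟩ := Nat.exists_eq_add_of_le hxc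
  obtain ⟨d', rfl⟩ := Nat.exists_eq_add_of_le (hxc.trans hxy)
  rw [blockVec_add, blockVec_add]
  have := hg (show d ∈ Set.Iio s by simp; omega) (show d' ∈ Set.Iio s by simp; omega) (by omega)
  simp only at this
  linarith

end BlockVec

structure IsIntervalSplit (i k : ℕ → ℚ) (r t : ℕ) (c : ℚ) : Prop where
  anti_left : ∀ m m', m < m' → m' < r → i m' < i m
  anti_right : ∀ m m', m < m' → m' < t → k m' < k m
  disjoint : Disjoint ((range r).image i) ((range t).image k)
  union : (range r).image i ∪ (range t).image k = (range (r + t)).image (fun m : ℕ => c + m)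

namespace IsIntervalSplit

variable {i k : ℕ → ℚ} {r t : ℕ} {c : ℚ} (h : IsIntervalSplit i k r t c)
include h

theorem symm : IsIntervalSplit k i t r c where
  anti_left := h.anti_right
  anti_right := h.anti_left
  disjoint := h.disjoint.symm
  union := by rw [union_comm, h.union, Nat.add_comm]

theorem strictAntiOn_left : StrictAntiOn i (Set.Iio r) :=
  fun _ _ _ hm' hmm' => h.anti_left _ _ hmm' hm'

theorem exists_eq_left {m : ℕ} (hm : m < r) : ∃ e < r + t, i m = c + e := by
  have : i m ∈ (range (r + t)).image (fun m : ℕ => c + m) :=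
    h.union ▸ mem_union_left _ (mem_image_of_mem i (mem_range.2 hm))
  obtain ⟨e, he, hie⟩ := mem_image.1 this
  exact ⟨e, mem_range.1 he, hie.symm⟩

theorem antitoneOn_left : AntitoneOn (fun m => i m + m) (Set.Iio r) :=
  h.strictAntiOn_left.antitoneOn_add_natCast fun m hm =>
    let ⟨e, _, he⟩ := h.exists_eq_left hm; ⟨e, by rw [he, Int.cast_natCast]⟩

theorem le_left {m : ℕ} (hm : m < r) : c ≤ i m := by
  obtain ⟨e, -, he⟩ := h.exists_eq_left hm
  linarith [(Nat.cast_nonneg e : (0 : ℚ) ≤ e)]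

theorem add_le_left {m : ℕ} (hm : m < r) : c + r ≤ i m + (m + 1) := by
  have := h.antitoneOn_left (show m ∈ Set.Iio r from hm) (show r - 1 ∈ Set.Iio r by simp; omega)
    (by omega)
  simp only [Nat.cast_pred (show 0 < r by omega)] at this
  linarith [h.le_left (show r - 1 < r by omega)]

theorem left_add_le {m : ℕ} (hm : m < r) : i m + (m + 1) ≤ c + r + t := by
  obtain ⟨e, he, hie⟩ := h.exists_eq_left (show 0 < r by omega)
  have := h.antitoneOn_left (show 0 ∈ Set.Iio r by simp; omega) (show m ∈ Set.Iio r from hm)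
    (Nat.zero_le m)
  have he' : (e : ℚ) + 1 ≤ r + t := by exact_mod_cast he
  simp only [hie, Nat.cast_zero] at this
  linarith

theorem card_filter_add_card_filter (P : ℚ → Prop) [DecidablePred P] :
    #{m ∈ range r | P (i m)} + #{m ∈ range t | P (k m)} =
      #{e ∈ range (r + t) | P (c + (e : ℕ))} := by
  have hinj : ∀ {n} {f : ℕ → ℚ}, StrictAntiOn f (Set.Iio n) →
      #{m ∈ range n | P (f m)} = #{x ∈ (range n).image f | P x} := fun hf => by
    rw [filter_image, card_image_of_injOn (hf.injOn.mono fun x hx => by simp_all)]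
  rw [hinj h.strictAntiOn_left, hinj h.symm.strictAntiOn_left,
    ← card_union_of_disjoint (h.disjoint.mono (filter_subset _ _) (filter_subset _ _)),
    ← filter_union, h.union, filter_image,
    card_image_of_injOn (fun x _ y _ hxy => by simpa using hxy)]

end IsIntervalSplit

theorem extend_val_apply {β : Type*} [Zero β] {n : ℕ} (f : Fin n → β) {m : ℕ}
    (hm : m < n) :
    Function.extend Fin.val f 0 m = f ⟨m, hm⟩ :=
  Fin.val_injective.extend_apply f 0 ⟨m, hm⟩

theorem map_range_extend_val {β : Type*} [Zero β] {n : ℕ} (f : Fin n → β) :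
    (range n).val.map (Function.extend Fin.val f 0) = univ.val.map f := by
  rw [← Nat.Iio_eq_range, ← Fin.map_valEmbedding_univ, map_val, Multiset.map_map]
  exact Multiset.map_congr rfl fun m _ => extend_val_apply f m.2

section Mu

variable {p1 q1 p2 q2 r s : ℕ} {ξ : ℤ} {b : Fin p2 → ℤ} {a : Fin q2 → ℤ} {m : ℕ}

theorem muLeft_of_le_of_lt (h₁ : p2 ≤ m) (h₂ : m < p2 + r + s) :
    muLeft p1 q1 p2 q2 r s ξ b a m = ξ + ((q2 : ℚ) - p2) / 2 + (m + 1) := by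
  simp only [muLeft, dif_neg (not_lt.2 h₁), if_pos h₂]

theorem muLeft_le (hξ : (p1 : ℤ) + p2 ≤ q1 + q2 + 2 * ξ) (hb : ∀ m, 0 ≤ b m)
    (hm : m < p2 + r + s) :
    muLeft p1 q1 p2 q2 r s ξ b a m ≤ ξ + ((q2 : ℚ) - p2) / 2 + (m + 1) := by
  by_cases h : m < p2
  · have hξ' : (p1 : ℚ) + p2 ≤ q1 + q2 + 2 * ξ := by exact_mod_cast hξ
    have hb' : (0 : ℚ) ≤ b ⟨m, h⟩ := by exact_mod_cast hb _
    simp only [muLeft, dif_pos h]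
    linarith
  · exact (muLeft_of_le_of_lt (not_lt.1 h) hm).le

theorem le_muLeft (ha : ∀ m, 0 ≤ a m) (h₁ : p2 ≤ m) (h₂ : m < p2 + r + s + q2) :
    ξ + ((q2 : ℚ) - p2) / 2 + (m + 1) ≤ muLeft p1 q1 p2 q2 r s ξ b a m := by
  by_cases h : m < p2 + r + s
  · exact (muLeft_of_le_of_lt h₁ h).ge
  · have ha' : (0 : ℚ) ≤ a ⟨p2 + r + s + q2 - 1 - m, by omega⟩ := by exact_mod_cast ha _
    simp only [muLeft, dif_neg (not_lt.2 h₁), if_neg h,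
      dif_pos (show p2 + r + s + q2 - 1 - m < q2 by omega)]
    linarith

end Mu

namespace USol

variable {p1 p2 q1 q2 r s t u : ℕ} {ξ : ℤ} {i j k l : ℕ → ℚ}
  (sol : USol p1 p2 q1 q2 r s t u ξ i j k l)

noncomputable def vl : ℕ → ℚ := Function.extend Fin.val sol.vL 0

noncomputable def zl : ℕ → ℚ := Function.extend Fin.val sol.zL 0

-- `muLeft` of the exchanged data is `muRight` of the original one by definition.
noncomputable def swap : USol q1 q2 p1 p2 t u r s ξ k l i j where
  vL := sol.vR
  vR := sol.vL
  b := sol.a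
  a := sol.b
  zL := sol.zR
  zR := sol.zL
  b_anti := sol.a_anti
  b_nonneg := sol.a_nonneg
  a_anti := sol.b_anti
  a_nonneg := sol.b_nonneg
  hvL := by rw [Nat.add_comm q2 p2, add_comm (q2 : ℚ) p2]; exact sol.hvR
  hvR := by rw [Nat.add_comm q2 p2, add_comm (q2 : ℚ) p2]; exact sol.hvL
  zL_anti := sol.zR_anti
  zR_anti := sol.zL_anti
  hz := by
    rw [add_comm, sol.hz, show q1 + q2 + p1 + p2 = p1 + p2 + q1 + q2 by omega]
    congr 1
    funext m
    ring
  heqL := sol.heqR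
  heqR := sol.heqL

theorem vl_eq_muLeft_add {m : ℕ} (hm : m < p1 + p2) :
    sol.vl m = muLeft p1 q1 p2 q2 r s ξ sol.b sol.a m + sol.zl m := by
  rw [vl, zl, extend_val_apply _ hm, extend_val_apply _ hm, sol.heqL]

theorem vl_le (hξ : (p1 : ℤ) + p2 ≤ q1 + q2 + 2 * ξ) (hrs : r + s + q2 = p1) {m : ℕ}
    (hm : m < p2 + r + s) : sol.vl m ≤ ξ + ((q2 : ℚ) - p2) / 2 + (m + 1) + sol.zl m := by
  rw [sol.vl_eq_muLeft_add (by omega)]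
  linarith [muLeft_le (a := sol.a) hξ sol.b_nonneg hm]

theorem le_vl (hrs : r + s + q2 = p1) {m : ℕ} (h₁ : p2 ≤ m) (h₂ : m < p1 + p2) :
    ξ + ((q2 : ℚ) - p2) / 2 + (m + 1) + sol.zl m ≤ sol.vl m := by
  rw [sol.vl_eq_muLeft_add h₂]
  linarith [le_muLeft (p1 := p1) (q1 := q1) (ξ := ξ) (b := sol.b) sol.a_nonneg h₁
    (show m < p2 + r + s + q2 by omega)]

theorem map_vl : (range (p1 + p2)).val.map sol.vl =
    (range (p1 + p2)).val.map (blockVec r (p2 + q2) (((p2 : ℚ) + q2 + 1) / 2 + r) i j) := by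
  rw [vl, map_range_extend_val, sol.hvL, ← Nat.Iio_eq_range, ← Fin.map_valEmbedding_univ,
    map_val, Multiset.map_map]
  rfl

theorem card_filter_zl_add_card_filter (P : ℚ → Prop) [DecidablePred P] :
    #{m ∈ range (p1 + p2) | P (sol.zl m)} + #{m ∈ range (q1 + q2) | P (sol.swap.zl m)} =
      #{e ∈ range (p1 + p2 + q1 + q2) | P (((p1 : ℚ) + p2 + q1 + q2 - 1) / 2 - (e : ℕ))} := by
  have := congrArg (Multiset.countP P) sol.hz
  rwa [← map_range_extend_val, ← map_range_extend_val, Multiset.countP_add,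
    Multiset.countP_map, Multiset.countP_map, Multiset.countP_map] at this

theorem zl_strictAntiOn : StrictAntiOn sol.zl (Set.Iio (p1 + p2)) := fun x hx y hy hxy => by
  rw [zl, extend_val_apply _ hx, extend_val_apply _ hy]
  exact sol.zL_anti (Fin.mk_lt_mk.2 hxy)

theorem exists_zl_eq {m : ℕ} (hm : m < p1 + p2) :
    ∃ e < p1 + p2 + q1 + q2, sol.zl m = ((p1 : ℚ) + p2 + q1 + q2 - 1) / 2 - e := by
  have : sol.zl m ∈ (range (p1 + p2 + q1 + q2)).val.map
      (fun e : ℕ => ((p1 : ℚ) + p2 + q1 + q2 - 1) / 2 - e) := by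
    rw [← sol.hz, zl, extend_val_apply _ hm]
    exact Multiset.mem_add.2 (Or.inl (Multiset.mem_map_of_mem _ (mem_univ_val _)))
  obtain ⟨e, he, hze⟩ := Multiset.mem_map.1 this
  exact ⟨e, by simpa using he, hze.symm⟩

theorem zl_antitoneOn : AntitoneOn (fun m => sol.zl m + m) (Set.Iio (p1 + p2)) :=
  sol.zl_strictAntiOn.antitoneOn_add_natCast (c := ((p1 : ℚ) + p2 + q1 + q2 - 1) / 2) fun m hm =>
    let ⟨e, _, he⟩ := sol.exists_zl_eq hm; ⟨-e, by rw [he]; push_cast; ring⟩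

theorem antitoneOn_muMid_add_zl :
    AntitoneOn (fun m => ξ + ((q2 : ℚ) - p2) / 2 + (m + 1) + sol.zl m) (Set.Iio (p1 + p2)) :=
  fun x hx y hy hxy => by
    have := sol.zl_antitoneOn hx hy hxy
    simp only at this ⊢
    linarith

section Bounds

variable {c d : ℚ} (hrs : r + s + q2 = p1) (hik : IsIntervalSplit i k r t c)
  (hjl : IsIntervalSplit j l s u d) (hc : 2 * c = p2 + q2 + 1) (hcd : c + d + s + u = 1)
include hrs hik hjl hc hcd

theorem antitoneOn_blockVec :
    AntitoneOn (blockVec r (p2 + q2) (((p2 : ℚ) + q2 + 1) / 2 + r) i j) (Set.Iio (p1 + p2)) := by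
  rw [show p1 + p2 = r + (p2 + q2) + s by omega]
  refine blockVec_antitoneOn hik.antitoneOn_left hjl.antitoneOn_left (fun m hm => ?_)
    (fun m hm => ?_)
  · linarith [hik.add_le_left hm]
  · push_cast
    linarith [hjl.left_add_le hm]

theorem zl_add_le_head {m : ℕ} (hm : m < r) :
    sol.zl (p2 + m) + (ξ + ((p2 : ℚ) + q2) / 2) ≤ i m := by
  have := le_apply_sub_of_map_eq sol.map_vl (antitoneOn_blockVec hrs hik hjl hc hcd)
    sol.antitoneOn_muMid_add_zl (fun y h₁ h₂ => sol.le_vl hrs h₁ h₂) (Nat.le_add_right p2 m)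
    (by omega)
  rw [Nat.add_sub_cancel_left, blockVec_of_lt m hm] at this
  push_cast at this
  linarith

theorem zl_add_lt_of_le {x : ℕ} (h₁ : p2 + r ≤ x) (h₂ : x < p1 + p2) :
    sol.zl x + (ξ + ((p2 : ℚ) + q2) / 2) < c := by
  have := le_apply_sub_of_map_eq sol.map_vl (antitoneOn_blockVec hrs hik hjl hc hcd)
    sol.antitoneOn_muMid_add_zl (fun y h₁ h₂ => sol.le_vl hrs h₁ h₂) (by omega : p2 ≤ x)
    h₂
  have hmid := blockVec_le_mid (c := p2 + q2) (mid := ((p2 : ℚ) + q2 + 1) / 2 + r) (f := i)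
    (g := j) (fun m hm => by push_cast; linarith [hjl.left_add_le hm]) (by omega : r ≤ x - p2)
    (by omega : x - p2 < r + (p2 + q2) + s)
  have hx : (p2 : ℚ) + r ≤ x := by exact_mod_cast h₁
  linarith

variable (hξ : (p1 : ℤ) + p2 ≤ q1 + q2 + 2 * ξ)
include hξ

theorem tail_le_zl_add {m : ℕ} (hm : m < s) :
    j m ≤ sol.zl (p2 + r + m) + (ξ - ((p2 : ℚ) + q2) / 2) := by
  have := apply_add_le_of_map_eq sol.map_vl (antitoneOn_blockVec hrs hik hjl hc hcd)
    sol.antitoneOn_muMid_add_zl (by omega) (fun y hy => sol.vl_le hξ hrs hy)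
    (show p2 + r + m < p2 + r + s by omega)
  rw [show p2 + r + m + (p1 + p2 - (p2 + r + s)) = r + (p2 + q2) + m by omega,
    blockVec_add] at this
  push_cast at this
  linarith

theorem le_zl_add_of_lt {x : ℕ} (h : x < p2 + r) :
    c ≤ sol.zl x + (ξ + ((p2 : ℚ) + q2) / 2) := by
  have := apply_add_le_of_map_eq sol.map_vl (antitoneOn_blockVec hrs hik hjl hc hcd)
    sol.antitoneOn_muMid_add_zl (by omega) (fun y hy => sol.vl_le hξ hrs hy)
    (show x < p2 + r + s by omega)
  have hmid := mid_le_blockVec (r := r) (c := p2 + q2) (mid := ((p2 : ℚ) + q2 + 1) / 2 + r)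
    (f := i) (g := j) (fun m hm => by linarith [hik.add_le_left hm])
    (show x + (p1 + p2 - (p2 + r + s)) < r + (p2 + q2) by omega)
  have hx : (x : ℚ) + 1 ≤ p2 + r := by exact_mod_cast h
  linarith

end Bounds

section Squeeze

variable {c d : ℚ} (hrs : r + s + q2 = p1) (htu : t + u + p2 = q1)
  (hik : IsIntervalSplit i k r t c) (hjl : IsIntervalSplit j l s u d) (hc : 2 * c = p2 + q2 + 1)
  (hcd : c + d + s + u = 1)
include hrs htu hik hjl hc hcd

theorem head_le_zl_add (hrt : 2 * ((r : ℤ) + t) = p1 + q1 - p2 - q2 + 2 * ξ) {n : ℕ}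
    (hn : n < r) : i n ≤ sol.zl (p2 + n) + (ξ + ((p2 : ℚ) + q2) / 2) := by
  set C : ℚ := ξ + ((p2 : ℚ) + q2) / 2 with hC
  obtain ⟨e, he, hie⟩ := hik.exists_eq_left hn
  have hrtQ : 2 * ((r : ℚ) + t) = p1 + q1 - p2 - q2 + 2 * ξ := by exact_mod_cast hrt
  have htotal : #{x ∈ range (p1 + p2 + q1 + q2) |
      i n ≤ ((p1 : ℚ) + p2 + q1 + q2 - 1) / 2 - (x : ℕ) + C} = p2 + q2 + r + t - e := by
    obtain ⟨a, ha⟩ : ∃ a, a + e + 1 = p2 + q2 + r + t :=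
      ⟨p2 + q2 + r + t - 1 - e, by omega⟩
    have haQ : (a : ℚ) + e + 1 = p2 + q2 + r + t := by exact_mod_cast ha
    rw [card_filter_range_eq_of_iff_le (a := a) (by omega) fun x _ => ?_]
    · omega
    rw [← Nat.cast_le (α := ℚ)]
    constructor <;> intro <;> linarith
  have hsplit := hik.card_filter_add_card_filter (i n ≤ ·)
  have hinterval : #{x ∈ range (r + t) | i n ≤ c + (x : ℕ)} = r + t - e :=
    card_filter_range_eq_of_iff_ge fun x _ => by rw [hie, add_le_add_iff_left, Nat.cast_le]
  have hhead : #{m ∈ range r | i n ≤ i m} = n + 1 :=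
    card_filter_range_eq_of_iff_le hn fun m hm => hik.strictAntiOn_left.le_iff_ge hn hm
  have hright : #{x ∈ range (q1 + q2) | i n ≤ sol.swap.zl x + C} ≤
      #(range q2) + #{m ∈ range t | i n ≤ k m} := by
    refine card_filter_le_card_add_card_filter _ (fun m hm h => h.trans ?_)
      (fun x hx h hx' => mem_range.2 (hx'.resolve_right fun hx'' => ?_))
    · linarith [sol.swap.zl_add_le_head htu hik.symm hjl.symm (by linarith) (by linarith) hm]
    · linarith [sol.swap.zl_add_lt_of_le htu hik.symm hjl.symm (by linarith) (by linarith) hx'' hx,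
        hik.le_left hn]
  have hsum := sol.card_filter_zl_add_card_filter (fun y => i n ≤ y + C)
  rw [card_range] at hright
  refine le_apply_of_lt_card_filter (n := p1 + p2) (f := fun m => sol.zl m + C) ?_ (by omega)
  exact fun x hx y hy hxy => by simpa using sol.zl_strictAntiOn.antitoneOn hx hy hxy

theorem zl_add_le_tail (hξ : (q1 : ℤ) + q2 ≤ p1 + p2 + 2 * ξ)
    (hd : 2 * d = 1 - p1 - q1 + 2 * ξ) {n : ℕ} (hn : n < s) :
    sol.zl (p2 + r + n) + (ξ - ((p2 : ℚ) + q2) / 2) ≤ j n := by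
  set C : ℚ := ξ - ((p2 : ℚ) + q2) / 2 with hC
  obtain ⟨e, he, hje⟩ := hjl.exists_eq_left hn
  have htotal : #{x ∈ range (p1 + p2 + q1 + q2) |
      ((p1 : ℚ) + p2 + q1 + q2 - 1) / 2 - (x : ℕ) + C ≤ j n} = p2 + q2 + e + 1 := by
    obtain ⟨a, ha⟩ : ∃ a, a + e + 1 = p1 + q1 := ⟨p1 + q1 - 1 - e, by omega⟩
    have haQ : (a : ℚ) + e + 1 = p1 + q1 := by exact_mod_cast ha
    rw [card_filter_range_eq_of_iff_ge (a := a) fun x _ => ?_]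
    · omega
    rw [← Nat.cast_le (α := ℚ)]
    constructor <;> intro <;> linarith
  have hsplit := hjl.card_filter_add_card_filter (fun y => y ≤ j n)
  have hinterval : #{x ∈ range (s + u) | d + (x : ℕ) ≤ j n} = e + 1 :=
    card_filter_range_eq_of_iff_le he fun x _ => by rw [hje, add_le_add_iff_left, Nat.cast_le]
  have htail : #{m ∈ range s | j m ≤ j n} = s - n :=
    card_filter_range_eq_of_iff_ge fun m hm => hjl.strictAntiOn_left.le_iff_ge hm hn
  have hright : #{x ∈ range (q1 + q2) | sol.swap.zl x + C ≤ j n} ≤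
      #(Ico (q2 + t + u) (q1 + q2)) + #{m ∈ range u | l m ≤ j n} := by
    refine card_filter_le_card_add_card_filter (f := fun x => sol.swap.zl x + C) (g := l)
      (P := (· ≤ j n)) (a := q2 + t) _ (fun m hm h => ?_)
      (fun x hx h hx' => mem_Ico.2 ⟨hx'.resolve_left fun hx'' => ?_, hx⟩)
    · linarith [sol.swap.tail_le_zl_add htu hik.symm hjl.symm (by linarith) (by linarith) hξ hm]
    · linarith [sol.swap.le_zl_add_of_lt htu hik.symm hjl.symm (by linarith) (by linarith) hξ
        hx'', hjl.left_add_le hn]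
  have hsum := sol.card_filter_zl_add_card_filter (fun y => y + C ≤ j n)
  rw [Nat.card_Ico] at hright
  refine apply_le_of_sub_le_card_filter (n := p1 + p2) (f := fun m => sol.zl m + C) ?_
    (by omega) (by omega)
  exact fun x hx y hy hxy => by simpa using sol.zl_strictAntiOn.antitoneOn hx hy hxy

end Squeeze

theorem vL_mk_eq {m : ℕ} (h₁ : p2 ≤ m) (h₂ : m < p2 + r + s) (h : m < p1 + p2) :
    sol.vL ⟨m, h⟩ = ξ + ((q2 : ℚ) - p2) / 2 + (m + 1) + sol.zl m := by
  rw [sol.heqL, muLeft_of_le_of_lt h₁ h₂, zl, extend_val_apply]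

theorem vL_window {c d : ℚ} (hξ3 : (p1 : ℤ) + p2 ≤ q1 + q2 + 2 * ξ)
    (hξ4 : (q1 : ℤ) + q2 ≤ p1 + p2 + 2 * ξ)
    (hrt : 2 * ((r : ℤ) + t) = p1 + q1 - p2 - q2 + 2 * ξ)
    (hsu : 2 * ((s : ℤ) + u) = p1 + q1 - p2 - q2 - 2 * ξ)
    (hrs : r + s + q2 = p1) (htu : t + u + p2 = q1)
    (hik : IsIntervalSplit i k r t c) (hjl : IsIntervalSplit j l s u d)
    (hc : 2 * c = p2 + q2 + 1) (hd : 2 * d = 1 - p1 - q1 + 2 * ξ) :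
    (∀ m < r, ∀ h : p2 + m < p1 + p2, sol.vL ⟨p2 + m, h⟩ = i m + (m + 1)) ∧
    (∀ m < s, ∀ h : p2 + r + m < p1 + p2,
      sol.vL ⟨p2 + r + m, h⟩ = j m + ((p1 : ℚ) + p2 - s + m + 1)) := by
  have hsuQ : 2 * ((s : ℚ) + u) = p1 + q1 - p2 - q2 - 2 * ξ := by exact_mod_cast hsu
  have hcd : c + d + s + u = 1 := by linarith
  have hrsQ : (r : ℚ) + s + q2 = p1 := by exact_mod_cast hrs
  refine ⟨fun m hm h => ?_, fun m hm h => ?_⟩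
  · rw [sol.vL_mk_eq (by omega) (by omega)]
    have := sol.zl_add_le_head hrs hik hjl hc hcd hm
    have := sol.head_le_zl_add hrs htu hik hjl hc hcd hrt hm
    push_cast
    linarith
  · rw [sol.vL_mk_eq (by omega) (by omega)]
    have := sol.tail_le_zl_add hrs hik hjl hc hcd hξ3 hm
    have := sol.zl_add_le_tail hrs htu hik hjl hc hcd hξ4 hd hm
    push_cast
    linarith

end USol

/-- For every solution `(v, (a,b), z)`, the middle windows of the two blocks of `v`
carry exactly the tail entries of `τ̃`: positions `p2+1, …, p−q2` of the left block are
`i_1+1, …, i_r+r, j_1+p−s+1, …, j_s+p`, and positions `q2+1, …, q−p2` of the right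
block are `k_1+1, …, k_t+t, l_1+q−u+1, …, l_u+q` (0-based indices below). -/
theorem stmt18
    (p1 p2 q1 q2 r s t u : ℕ) (ξ : ℤ) (i j k l : ℕ → ℚ)
    (hξ3 : (p1 : ℤ) + p2 ≤ (q1 : ℤ) + q2 + 2 * ξ)
    (hξ4 : (q1 : ℤ) + q2 ≤ (p1 : ℤ) + p2 + 2 * ξ)
    (hrt : 2 * ((r : ℤ) + t) = (p1 : ℤ) + q1 - p2 - q2 + 2 * ξ)
    (hsu : 2 * ((s : ℤ) + u) = (p1 : ℤ) + q1 - p2 - q2 - 2 * ξ)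
    (hrs : r + s + q2 = p1) (htu : t + u + p2 = q1)
    (hi_anti : ∀ m m', m < m' → m' < r → i m' < i m)
    (hk_anti : ∀ m m', m < m' → m' < t → k m' < k m)
    (hj_anti : ∀ m m', m < m' → m' < s → j m' < j m)
    (hl_anti : ∀ m m', m < m' → m' < u → l m' < l m)
    (hik_disj : Disjoint ((Finset.range r).image i) ((Finset.range t).image k))
    (hik_union : (Finset.range r).image i ∪ (Finset.range t).image k =
      (Finset.range (r + t)).image (fun m : ℕ => ((p2 : ℚ) + q2 + 1) / 2 + m))
    (hjl_disj : Disjoint ((Finset.range s).image j) ((Finset.range u).image l))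
    (hjl_union : (Finset.range s).image j ∪ (Finset.range u).image l =
      (Finset.range (s + u)).image
        (fun m : ℕ => -((p1 : ℚ) + q1 - 1) / 2 + ξ + m))
    (sol : USol p1 p2 q1 q2 r s t u ξ i j k l) :
    (∀ m : ℕ, ∀ hm : m < r,
      sol.vL ⟨p2 + m, by omega⟩ = i m + (m + 1)) ∧
    (∀ m : ℕ, ∀ hm : m < s,
      sol.vL ⟨p2 + r + m, by omega⟩ = j m + ((p1 : ℚ) + p2 - s + m + 1)) ∧
    (∀ m : ℕ, ∀ hm : m < t,
      sol.vR ⟨q2 + m, by omega⟩ = k m + (m + 1)) ∧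
    (∀ m : ℕ, ∀ hm : m < u,
      sol.vR ⟨q2 + t + m, by omega⟩ = l m + ((q1 : ℚ) + q2 - u + m + 1)) := by
  have hik : IsIntervalSplit i k r t _ := ⟨hi_anti, hk_anti, hik_disj, hik_union⟩
  have hjl : IsIntervalSplit j l s u _ := ⟨hj_anti, hl_anti, hjl_disj, hjl_union⟩
  obtain ⟨hi, hj⟩ := sol.vL_window hξ3 hξ4 hrt hsu hrs htu hik hjl (by ring) (by ring)
  obtain ⟨hk, hl⟩ := sol.swap.vL_window hξ4 hξ3 (by linarith) (by linarith) htu hrs hik.symm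
    hjl.symm (by ring) (by ring)
  exact ⟨fun m hm => hi m hm _, fun m hm => hj m hm _, fun m hm => hk m hm _,
    fun m hm => hl m hm _⟩
end
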